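/- arXiv:0706.2223 — 3 statements merged into one kernel-verified Lean document; each statement's English description precedes it below -/
import Mathlib

section
/- The number of permutations of {1, ..., n} that avoid the pattern (1,2,3) (i.e., have no increasing subsequence of length 3) equals the n-th Catalan number. -/
/-!
Insert the maximum `n` into a 123-avoiding arrangement `π` of `0, …, n - 1`. The result avoids
123 exactly when everything in front of `n` is decreasing, so the admissible positions are the
front and the slots right after each entry of the strictly decreasing prefix of `π`; every
123-avoiding arrangement of `0, …, n` arises once this way. Inserting at the front lengthens that
prefix by one, inserting after `k ≥ 1` entries makes its length `k`. Hence, writing `N(n, c)` for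
the number of avoiders of length `n` whose decreasing prefix has length at least `c`,
`N(n + 1, c + 1) = N(n, c) + N(n + 1, c + 2)`, the same recurrence as the coefficients of the
powers of the Catalan series `C = 1 + X C²`; this gives `N(c + m, c) = [X^m] C^(c+1)`, and
`c = 0` is the theorem.
-/

open Finset PowerSeries

namespace List

variable {α : Type*} [LinearOrder α]

def HasIncreasingTriple (l : List α) : Prop :=
  ∃ a b c, a < b ∧ b < c ∧ [a, b, c] <+ l

theorem HasIncreasingTriple.mono {l₁ l₂ : List α} (h : l₁ <+ l₂) :
    l₁.HasIncreasingTriple → l₂.HasIncreasingTriple :=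
  fun ⟨a, b, c, hab, hbc, hs⟩ => ⟨a, b, c, hab, hbc, hs.trans h⟩

theorem hasIncreasingTriple_ofFn_iff {n : ℕ} (f : Fin n → α) :
    (ofFn f).HasIncreasingTriple ↔ ∃ i j k, i < j ∧ j < k ∧ f i < f j ∧ f j < f k := by
  rw [ofFn_eq_map]
  constructor
  · rintro ⟨a, b, c, hab, hbc, hs⟩
    obtain ⟨l, hl, hmap⟩ := sublist_map_iff.1 hs
    obtain ⟨i, j, k, rfl⟩ := length_eq_three.1 (by simpa using (congrArg length hmap).symm)
    simp only [map_cons, map_nil, cons.injEq] at hmap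
    obtain ⟨rfl, rfl, rfl, -⟩ := hmap
    have hsorted := (pairwise_lt_finRange n).sublist hl
    simp only [pairwise_cons, mem_cons, not_mem_nil] at hsorted
    exact ⟨i, j, k, hsorted.1 j (by simp), hsorted.2.1 k (by simp), hab, hbc⟩
  · rintro ⟨i, j, k, hij, hjk, hfij, hfjk⟩
    have hsorted : [i, j, k].Pairwise (· < ·) := by simp [hij, hjk, hij.trans hjk]
    have hs : [i, j, k] <+ finRange n :=
      sublist_of_subperm_of_pairwise (subperm_of_subset hsorted.nodup (by simp))
        hsorted (pairwise_lt_finRange n)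
    exact ⟨f i, f j, f k, hfij, hfjk, by simpa using hs.map f⟩

theorem pairwise_gt_of_not_hasIncreasingTriple_append_cons {A B : List α} {M : α}
    (h : ¬ (A ++ M :: B).HasIncreasingTriple) (hlt : ∀ x ∈ A, x < M) (hA : A.Nodup) :
    A.Pairwise (· > ·) := by
  refine pairwise_iff_forall_sublist.2 fun {a b} hab => ?_
  have hne : a ≠ b := by simpa using hA.sublist hab
  refine (lt_or_gt_of_ne hne).resolve_left fun hlt' => h ⟨a, b, M, hlt', hlt b ?_, ?_⟩
  · exact hab.subset (by simp)
  · simpa using hab.append ((nil_sublist B).cons_cons M)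

theorem not_hasIncreasingTriple_append_cons {A B : List α} {M : α}
    (h : ¬ (A ++ B).HasIncreasingTriple) (hdec : A.Pairwise (· > ·))
    (hlt : ∀ x ∈ A ++ B, x < M) : ¬ (A ++ M :: B).HasIncreasingTriple := by
  rintro ⟨a, b, c, hab, hbc, hs⟩
  obtain ⟨l₁, l₂, heq, h₁, h₂⟩ := sublist_append_iff.1 hs
  rcases sublist_cons_iff.1 h₂ with h₂ | ⟨r, rfl, hr⟩
  · exact h ⟨a, b, c, hab, hbc, heq ▸ h₁.append h₂⟩
  have hinc : (l₁ ++ M :: r).Pairwise (· < ·) := heq ▸ by simp [hab, hbc, hab.trans hbc]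
  -- `M` exceeds everything else, so it must be the last entry `c`, preceded by `a < b` in `A`
  have hr : r = [] := eq_nil_iff_forall_not_mem.2 fun x hx =>
    (hlt x (mem_append_right A (hr.subset hx))).not_gt
      ((pairwise_cons.1 (pairwise_append.1 hinc).2.1).1 x hx)
  subst hr
  rcases l₁ with _ | ⟨x, _ | ⟨y, t⟩⟩
  · simp at heq
  · simp at heq
  · have hxy : x < y := (pairwise_cons.1 hinc).1 y (by simp)
    have hyx : x > y := by simpa using (hdec.sublist h₁).sublist (by simp : [x, y] <+ x :: y :: t)
    exact hxy.not_gt hyx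

def decreasingPrefixLength (l : List α) : ℕ :=
  Nat.findGreatest (fun j => (l.take j).Pairwise (· > ·)) l.length

theorem le_decreasingPrefixLength_iff {l : List α} {j : ℕ} :
    j ≤ l.decreasingPrefixLength ↔ j ≤ l.length ∧ (l.take j).Pairwise (· > ·) := by
  refine ⟨fun h => ⟨h.trans (Nat.findGreatest_le _), ?_⟩,
    fun h => Nat.le_findGreatest h.1 h.2⟩
  have hmax : (l.take l.decreasingPrefixLength).Pairwise (· > ·) :=
    Nat.findGreatest_spec (P := fun j => (l.take j).Pairwise (· > ·)) (Nat.zero_le _) (by simp)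
  simpa [take_take, min_eq_left h] using hmax.sublist (take_sublist j _)

theorem decreasingPrefixLength_le_length (l : List α) : l.decreasingPrefixLength ≤ l.length :=
  Nat.findGreatest_le _

theorem one_le_decreasingPrefixLength {l : List α} (hl : l ≠ []) :
    1 ≤ l.decreasingPrefixLength := by
  obtain ⟨a, t, rfl⟩ := exists_cons_of_ne_nil hl
  simp [le_decreasingPrefixLength_iff]

theorem length_le_decreasingPrefixLength_append {A : List α} (hA : A.Pairwise (· > ·))
    (B : List α) : A.length ≤ (A ++ B).decreasingPrefixLength :=
  le_decreasingPrefixLength_iff.2 ⟨by simp, by simpa using hA⟩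

theorem decreasingPrefixLength_cons_of_forall_lt {M : α} {l : List α} (h : ∀ x ∈ l, x < M) :
    (M :: l).decreasingPrefixLength = l.decreasingPrefixLength + 1 := by
  have hsucc (j : ℕ) :
      j + 1 ≤ (M :: l).decreasingPrefixLength ↔ j ≤ l.decreasingPrefixLength := by
    simp only [le_decreasingPrefixLength_iff, take_succ_cons, pairwise_cons, length_cons]
    exact ⟨fun h' => ⟨by omega, h'.2.2⟩,
      fun h' => ⟨by omega, fun x hx => h x (mem_of_mem_take hx), h'.2⟩⟩
  refine le_antisymm ?_ ((hsucc _).2 le_rfl)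
  obtain ⟨d, hd⟩ := Nat.exists_eq_add_of_le' (one_le_decreasingPrefixLength (cons_ne_nil M l))
  rw [hd]
  exact Nat.succ_le_succ ((hsucc d).1 hd.ge)

theorem decreasingPrefixLength_append_cons {A B : List α} {M : α} (hA : A ≠ [])
    (hdec : A.Pairwise (· > ·)) (hlt : ∀ x ∈ A, x < M) :
    (A ++ M :: B).decreasingPrefixLength = A.length := by
  refine le_antisymm (not_lt.1 fun h => ?_) (length_le_decreasingPrefixLength_append hdec _)
  obtain ⟨-, hpw⟩ := le_decreasingPrefixLength_iff.1 (Nat.succ_le_of_lt h)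
  rw [take_append, take_of_length_le (by simp)] at hpw
  obtain ⟨a, ha⟩ := exists_mem_of_ne_nil A hA
  exact (hlt a ha).not_gt ((pairwise_append.1 hpw).2.2 a ha M (by simp))

end List

open List

open Classical in
noncomputable def avoiders123 (n : ℕ) : Finset (List ℕ) :=
  (List.range n).permutations.toFinset.filter fun l => ¬ l.HasIncreasingTriple

section Avoiders

variable {n : ℕ} {l A B : List ℕ}

theorem mem_avoiders123 :
    l ∈ avoiders123 n ↔ l ~ List.range n ∧ ¬ l.HasIncreasingTriple := by
  simp [avoiders123, mem_permutations]

theorem lt_of_mem_avoiders123 (hl : l ∈ avoiders123 n) {x : ℕ} (hx : x ∈ l) : x < n := by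
  simpa using (mem_avoiders123.1 hl).1.subset hx

theorem append_cons_perm_range_succ_iff :
    A ++ n :: B ~ List.range (n + 1) ↔ A ++ B ~ List.range n := by
  have hmid : A ++ n :: B ~ n :: (A ++ B) := perm_middle
  have hrange : List.range (n + 1) ~ n :: List.range n := by
    rw [range_succ]
    exact perm_append_singleton n _
  exact ⟨fun h => (perm_cons n).1 (hmid.symm.trans (h.trans hrange)),
    fun h => hmid.trans (((perm_cons n).2 h).trans hrange.symm)⟩

theorem append_cons_mem_avoiders123_succ_iff :
    A ++ n :: B ∈ avoiders123 (n + 1) ↔ A ++ B ∈ avoiders123 n ∧ A.Pairwise (· > ·) := by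
  simp only [mem_avoiders123, append_cons_perm_range_succ_iff]
  constructor
  · rintro ⟨hperm, hinc⟩
    have hlt : ∀ x ∈ A ++ B, x < n := fun x hx => by simpa using hperm.subset hx
    have hsub : A ++ B <+ A ++ n :: B := (Sublist.refl A).append (sublist_cons_self n B)
    refine ⟨⟨hperm, fun h => hinc (h.mono hsub)⟩, ?_⟩
    exact pairwise_gt_of_not_hasIncreasingTriple_append_cons hinc
      (fun x hx => hlt x (mem_append_left B hx))
      ((hperm.nodup_iff.2 nodup_range).sublist (sublist_append_left A B))
  · rintro ⟨⟨hperm, hinc⟩, hdec⟩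
    exact ⟨hperm, not_hasIncreasingTriple_append_cons hinc hdec
      fun x hx => by simpa using hperm.subset hx⟩

theorem exists_eq_append_cons_of_mem_avoiders123_succ {σ : List ℕ}
    (hσ : σ ∈ avoiders123 (n + 1)) :
    ∃ A B, σ = A ++ n :: B ∧ A ++ B ∈ avoiders123 n ∧ A.Pairwise (· > ·) := by
  have hn : n ∈ σ := (mem_avoiders123.1 hσ).1.mem_iff.2 (List.mem_range.2 n.lt_succ_self)
  obtain ⟨A, B, rfl⟩ := append_of_mem hn
  exact ⟨A, B, rfl, append_cons_mem_avoiders123_succ_iff.1 hσ⟩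

theorem erase_append_cons_of_mem_avoiders123 (h : A ++ B ∈ avoiders123 n) :
    (A ++ n :: B).erase n = A ++ B := by
  have hnA : n ∉ A := fun hn => (lt_of_mem_avoiders123 h (mem_append_left B hn)).false
  rw [erase_append_right _ hnA, erase_cons_head]

theorem decreasingPrefixLength_append_cons_of_mem_avoiders123 (h : A ++ B ∈ avoiders123 n)
    (hdec : A.Pairwise (· > ·)) :
    (A ++ n :: B).decreasingPrefixLength =
      if A = [] then B.decreasingPrefixLength + 1 else A.length := by
  split_ifs with hA
  · subst hA
    exact decreasingPrefixLength_cons_of_forall_lt fun x hx => lt_of_mem_avoiders123 h hx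
  · exact decreasingPrefixLength_append_cons hA hdec
      fun x hx => lt_of_mem_avoiders123 h (mem_append_left B hx)

theorem decreasingPrefixLength_append_cons_eq_succ_iff (h : A ++ B ∈ avoiders123 n)
    (hdec : A.Pairwise (· > ·)) {c : ℕ} :
    (A ++ n :: B).decreasingPrefixLength = c + 1 ↔
      c ≤ (A ++ B).decreasingPrefixLength ∧
        A.length = if (A ++ B).decreasingPrefixLength = c then 0 else c + 1 := by
  rw [decreasingPrefixLength_append_cons_of_mem_avoiders123 h hdec]
  by_cases hA : A = []
  · subst hA
    simp only [if_pos, nil_append, length_nil]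
    split_ifs <;> simp <;> omega
  · have hlen := length_le_decreasingPrefixLength_append hdec B
    have hpos := length_pos_iff.2 hA
    simp only [if_neg hA]
    split_ifs <;> omega

theorem card_filter_decreasingPrefixLength_eq_succ (n c : ℕ) :
    #{σ ∈ avoiders123 (n + 1) | σ.decreasingPrefixLength = c + 1} =
      #{π ∈ avoiders123 n | c ≤ π.decreasingPrefixLength} := by
  let pos : List ℕ → ℕ := fun π => if π.decreasingPrefixLength = c then 0 else c + 1
  refine card_nbij' (fun σ => σ.erase n) (fun π => π.take (pos π) ++ n :: π.drop (pos π))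
    ?_ ?_ ?_ ?_
  · intro σ hσ
    simp only [mem_coe, Finset.mem_filter] at hσ ⊢
    obtain ⟨A, B, rfl, hAB, hdec⟩ := exists_eq_append_cons_of_mem_avoiders123_succ hσ.1
    rw [erase_append_cons_of_mem_avoiders123 hAB]
    exact ⟨hAB, ((decreasingPrefixLength_append_cons_eq_succ_iff hAB hdec).1 hσ.2).1⟩
  · intro π hπ
    simp only [mem_coe, Finset.mem_filter] at hπ ⊢
    have hpos : pos π ≤ π.decreasingPrefixLength := by
      have := hπ.2
      simp only [pos]
      split_ifs <;> omega
    have hdec := (le_decreasingPrefixLength_iff.1 hpos).2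
    have hmem : π.take (pos π) ++ π.drop (pos π) ∈ avoiders123 n := by
      simpa using hπ.1
    refine ⟨append_cons_mem_avoiders123_succ_iff.2 ⟨hmem, hdec⟩, ?_⟩
    rw [decreasingPrefixLength_append_cons_eq_succ_iff hmem hdec, take_append_drop, length_take,
      min_eq_left (hpos.trans (decreasingPrefixLength_le_length π))]
    exact ⟨hπ.2, rfl⟩
  · intro σ hσ
    simp only [mem_coe, Finset.mem_filter] at hσ
    obtain ⟨A, B, rfl, hAB, hdec⟩ := exists_eq_append_cons_of_mem_avoiders123_succ hσ.1
    have hlen := ((decreasingPrefixLength_append_cons_eq_succ_iff hAB hdec).1 hσ.2).2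
    simp only [erase_append_cons_of_mem_avoiders123 hAB, pos, ← hlen, take_left, drop_left]
  · intro π hπ
    simp only [mem_coe, Finset.mem_filter] at hπ
    exact erase_append_cons_of_mem_avoiders123 (by simpa using hπ.1) |>.trans
      (take_append_drop _ _)

end Avoiders

theorem card_filter_le_eq_card_filter_eq_add {ι : Type*} (s : Finset ι) (f : ι → ℕ)
    (c : ℕ) :
    #{x ∈ s | c ≤ f x} = #{x ∈ s | f x = c} + #{x ∈ s | c + 1 ≤ f x} := by
  classical
  rw [← card_union_of_disjoint (disjoint_filter.2 fun _ _ h₁ h₂ => by omega), ← filter_or]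
  congr 1
  exact filter_congr fun _ _ => by omega

theorem card_avoiders123_filter_succ_le (n c : ℕ) :
    #{σ ∈ avoiders123 (n + 1) | c + 1 ≤ σ.decreasingPrefixLength} =
      #{π ∈ avoiders123 n | c ≤ π.decreasingPrefixLength} +
        #{σ ∈ avoiders123 (n + 1) | c + 2 ≤ σ.decreasingPrefixLength} := by
  rw [card_filter_le_eq_card_filter_eq_add, card_filter_decreasingPrefixLength_eq_succ]

theorem card_avoiders123_filter_le_of_lt {n c : ℕ} (h : n < c) :
    #{l ∈ avoiders123 n | c ≤ l.decreasingPrefixLength} = 0 := by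
  refine card_eq_zero.2 (filter_eq_empty_iff.2 fun l hl hc => ?_)
  have hlen : l.length = n := by simpa using (mem_avoiders123.1 hl).1.length_eq
  have := decreasingPrefixLength_le_length l
  omega

theorem card_avoiders123_succ_filter_one_le (n : ℕ) :
    #{l ∈ avoiders123 (n + 1) | 1 ≤ l.decreasingPrefixLength} = #(avoiders123 (n + 1)) := by
  refine congrArg card (filter_true_of_mem fun l hl => one_le_decreasingPrefixLength ?_)
  exact ne_nil_of_length_pos (by simp [(mem_avoiders123.1 hl).1.length_eq])

theorem card_avoiders123_zero : #(avoiders123 0) = 1 := by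
  rw [card_eq_one]
  exact ⟨[], by ext l; simp +contextual [mem_avoiders123, HasIncreasingTriple]⟩

theorem coeff_zero_catalanSeries_pow (k : ℕ) : coeff 0 (catalanSeries ^ k) = 1 := by
  simp [coeff_zero_eq_constantCoeff]

theorem coeff_succ_catalanSeries_pow_succ (k m : ℕ) :
    coeff (m + 1) (catalanSeries ^ (k + 1)) =
      coeff (m + 1) (catalanSeries ^ k) + coeff m (catalanSeries ^ (k + 2)) := by
  have h : catalanSeries ^ (k + 1) = catalanSeries ^ k + X * catalanSeries ^ (k + 2) := by
    calc catalanSeries ^ (k + 1) = catalanSeries ^ k * (catalanSeries ^ 2 * X + 1) := by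
          rw [catalanSeries_sq_mul_X_add_one, pow_succ]
      _ = catalanSeries ^ k + X * catalanSeries ^ (k + 2) := by ring
  rw [h, map_add, coeff_succ_X_mul]

theorem coeff_catalanSeries_sq (m : ℕ) : coeff m (catalanSeries ^ 2) = catalan (m + 1) := by
  simp [catalan_succ', sq, coeff_mul]

theorem card_avoiders123_filter_le (c m : ℕ) :
    #{l ∈ avoiders123 (c + m) | c ≤ l.decreasingPrefixLength} =
      coeff m (catalanSeries ^ (c + 1)) := by
  induction m generalizing c with
  | zero =>
    rw [coeff_zero_catalanSeries_pow, add_zero]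
    induction c with
    | zero => simpa using card_avoiders123_zero
    | succ c ih =>
      rw [card_avoiders123_filter_succ_le, ih,
        card_avoiders123_filter_le_of_lt (by omega)]
  | succ m ih =>
    induction c with
    | zero =>
      have h := ih 1
      rw [add_comm 1 m, card_avoiders123_succ_filter_one_le, coeff_catalanSeries_sq] at h
      simpa using h
    | succ c ihc =>
      have h := ih (c + 2)
      rw [show c + 2 + m = c + (m + 1) + 1 by omega] at h
      rw [show c + 1 + (m + 1) = c + (m + 1) + 1 by omega, card_avoiders123_filter_succ_le, ihc, h,
        coeff_succ_catalanSeries_pow_succ (c + 1)]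

theorem card_avoiders123 (n : ℕ) : #(avoiders123 n) = catalan n := by
  simpa using card_avoiders123_filter_le 0 n

theorem injective_ofFn_val_perm (n : ℕ) :
    Function.Injective fun π : Equiv.Perm (Fin n) => ofFn fun i => (π i : ℕ) :=
  fun _ _ h => Equiv.ext fun i => Fin.ext (congrFun (ofFn_injective h) i)

theorem image_ofFn_val_univ_perm (n : ℕ) :
    (univ : Finset (Equiv.Perm (Fin n))).image (fun π => ofFn fun i => (π i : ℕ)) =
      (List.range n).permutations.toFinset := by
  refine eq_of_subset_of_card_le (fun l hl => ?_) ?_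
  · obtain ⟨π, -, rfl⟩ := Finset.mem_image.1 hl
    have hrange : ofFn (fun i : Fin n => (i : ℕ)) = List.range n :=
      ext_getElem (by simp) (by simp)
    rw [mem_toFinset, mem_permutations, ← hrange]
    exact π.ofFn_comp_perm Fin.val
  · rw [card_image_of_injective _ (injective_ofFn_val_perm n),
      toFinset_card_of_nodup (nodup_permutations _ nodup_range), length_permutations, length_range,
      card_univ, Fintype.card_perm, Fintype.card_fin]

/-- The number of permutations of `{1,…,n}` with no increasing subsequence of
length `3` (i.e. avoiding the pattern `(1,2,3)`) equals the `n`-th Catalan number. -/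
theorem card_avoiding_123_eq_catalan (n : ℕ) :
    (Finset.univ.filter fun π : Equiv.Perm (Fin n) =>
        ¬ ∃ i j k : Fin n, i < j ∧ j < k ∧ π i < π j ∧ π j < π k).card = catalan n := by
  classical
  rw [← card_avoiders123, avoiders123, ← image_ofFn_val_univ_perm, filter_image,
    card_image_of_injective _ (injective_ofFn_val_perm n)]
  simp [hasIncreasingTriple_ofFn_iff]
end

section
/- Row-bumping lemma: Let T be a semistandard Young tableau and let x, x' be values row-inserted successively, first x into T (creating box B) and then x' into T ← x (creating box B'). If x ≤ x' then B is strictly left of and weakly below B'; if x > x' then B' is weakly left of and strictly below B. -/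
/-- Row-bump `x` into a row: returns the bumped entry (if any) and the new row.
The leftmost entry strictly greater than `x` is bumped. -/
def bump (x : ℕ) : List ℕ → Option ℕ × List ℕ
  | [] => (none, [x])
  | y :: ys =>
    if x < y then (some y, x :: ys)
    else
      let p := bump x ys
      (p.1, y :: p.2)

/-- RSK row insertion of a value into a tableau (list of rows, top row first). -/
def rowInsert : List (List ℕ) → ℕ → List (List ℕ)
  | [], x => [[x]]
  | r :: rs, x =>
    match bump x r with
    | (none, r') => r' :: rs
    | (some y, r') => r' :: rowInsert rs y

/-- `t` is a semistandard Young tableau: rows weakly increase left to right,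
row lengths weakly decrease top to bottom, columns strictly increase top to
bottom, and all rows are nonempty. -/
def IsSSYT (t : List (List ℕ)) : Prop :=
  (∀ r ∈ t, List.Pairwise (· ≤ ·) r) ∧
  (∀ i, i + 1 < t.length → (t.getD (i + 1) []).length ≤ (t.getD i []).length) ∧
  (∀ i j, i + 1 < t.length → j < (t.getD (i + 1) []).length →
    (t.getD i []).getD j 0 < (t.getD (i + 1) []).getD j 0) ∧
  (∀ r ∈ t, r ≠ [])

/-- Index of the first position where two lists differ. -/
def firstDiff : List ℕ → List ℕ → ℕ
  | x :: xs, y :: ys => if x = y then firstDiff xs ys + 1 else 0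
  | _, _ => 0

/-- The shape (list of row lengths) of a tableau. -/
def shape (t : List (List ℕ)) : List ℕ := t.map List.length

/-- The (row, column) coordinates (0-indexed, rows numbered top to bottom) of
the box created when the tableau `told` becomes `tnew` by a row insertion. -/
def newBox (told tnew : List (List ℕ)) : ℕ × ℕ :=
  let i := firstDiff (shape told) (shape tnew)
  (i, (shape tnew).getD i 0 - 1)

/-! Induct on the rows. In the first row, if `x ≤ x'` then `x'` is appended whenever `x` is, and
otherwise bumps a value at least as large as the one `x` bumped; if `x' < x` then `x'` always bumps,
and bumps a value at most `x`, hence smaller than the one `x` bumped. So the two bumped values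
satisfy the same hypothesis one row down. When one insertion stops before the other, the columns
are compared using the fact that a value bumped from column `k` of a row settles in the next row in
column at most `k`, since the entry below column `k` is strictly larger. -/

section Bump

variable {x y z : ℕ} {l : List ℕ}

@[simp]
lemma bump_cons_of_lt {w : ℕ} {ws : List ℕ} (h : x < w) : bump x (w :: ws) = (some w, x :: ws) := by
  simp [bump, h]

@[simp]
lemma bump_cons_of_not_lt {w : ℕ} {ws : List ℕ} (h : ¬x < w) :
    bump x (w :: ws) = ((bump x ws).1, w :: (bump x ws).2) := by
  simp [bump, h]

lemma bump_fst_eq_none_iff : (bump x l).1 = none ↔ ∀ z ∈ l, z ≤ x := by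
  induction l with
  | nil => simp [bump]
  | cons w ws ih =>
    by_cases h : x < w
    · simp [h]
    · simp [h, ih, le_of_not_gt h]

lemma bump_snd_of_fst_eq_none (h : (bump x l).1 = none) : (bump x l).2 = l ++ [x] := by
  induction l with
  | nil => rfl
  | cons w ws ih =>
    by_cases hxw : x < w
    · simp [hxw] at h
    · simp_all

lemma mem_of_bump_fst_eq_some (h : (bump x l).1 = some y) : y ∈ l := by
  induction l with
  | nil => simp [bump] at h
  | cons w ws ih =>
    by_cases hxw : x < w <;> simp_all

lemma lt_of_bump_fst_eq_some (h : (bump x l).1 = some y) : x < y := by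
  induction l with
  | nil => simp [bump] at h
  | cons w ws ih =>
    by_cases hxw : x < w <;> simp_all

lemma length_bump_snd_of_fst_eq_some (h : (bump x l).1 = some y) :
    (bump x l).2.length = l.length := by
  induction l with
  | nil => simp [bump] at h
  | cons w ws ih =>
    by_cases hxw : x < w
    · simp [hxw]
    · simp_all

lemma mem_bump_snd : x ∈ (bump x l).2 := by
  induction l with
  | nil => simp [bump]
  | cons w ws ih =>
    by_cases hxw : x < w
    · simp [hxw]
    · simp [hxw, ih]

lemma eq_or_mem_of_mem_bump_snd (hz : z ∈ (bump x l).2) : z = x ∨ z ∈ l := by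
  induction l with
  | nil => simpa [bump] using hz
  | cons w ws ih =>
    by_cases hxw : x < w
    · simp only [bump_cons_of_lt hxw, List.mem_cons] at hz ⊢
      tauto
    · simp only [bump_cons_of_not_lt hxw, List.mem_cons] at hz ⊢
      rcases hz with rfl | hz
      · simp
      · rcases ih hz with h | h <;> simp [h]

lemma bump_fst_le_of_lt (hl : l.Pairwise (· ≤ ·)) (h : (bump x l).1 = some y) (hz : z ∈ l)
    (hxz : x < z) : y ≤ z := by
  induction l with
  | nil => simp at hz
  | cons w ws ih =>
    rw [List.pairwise_cons] at hl
    by_cases hxw : x < w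
    · simp only [bump_cons_of_lt hxw, Option.some.injEq] at h
      subst h
      rcases List.mem_cons.mp hz with rfl | hz
      exacts [le_rfl, hl.1 z hz]
    · simp only [bump_cons_of_not_lt hxw] at h
      rcases List.mem_cons.mp hz with rfl | hz
      exacts [absurd hxz hxw, ih hl.2 h hz]

lemma pairwise_bump_snd (hl : l.Pairwise (· ≤ ·)) : (bump x l).2.Pairwise (· ≤ ·) := by
  induction l with
  | nil => simp [bump]
  | cons w ws ih =>
    rw [List.pairwise_cons] at hl
    by_cases hxw : x < w
    · simp only [bump_cons_of_lt hxw, List.pairwise_cons]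
      exact ⟨fun z hz => hxw.le.trans (hl.1 z hz), hl.2⟩
    · simp only [bump_cons_of_not_lt hxw, List.pairwise_cons]
      refine ⟨fun z hz => ?_, ih hl.2⟩
      rcases eq_or_mem_of_mem_bump_snd hz with rfl | hz
      exacts [le_of_not_gt hxw, hl.1 z hz]

lemma bump_fst_le_bump_fst {x' y' : ℕ} (hl : l.Pairwise (· ≤ ·)) (hx : x ≤ x')
    (h : (bump x l).1 = some y) (h' : (bump x' (bump x l).2).1 = some y') : y ≤ y' := by
  have hxy' : x' < y' := lt_of_bump_fst_eq_some h'
  rcases eq_or_mem_of_mem_bump_snd (mem_of_bump_fst_eq_some h') with rfl | hy'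
  · exact absurd hx (not_le.mpr hxy')
  · exact bump_fst_le_of_lt hl h hy' (hx.trans_lt hxy')

lemma bump_fst_lt_bump_fst {x' y' : ℕ} (hl : l.Pairwise (· ≤ ·)) (hx : x' < x)
    (h : (bump x l).1 = some y) (h' : (bump x' (bump x l).2).1 = some y') : y' < y :=
  (bump_fst_le_of_lt (pairwise_bump_snd hl) h' mem_bump_snd hx).trans_lt
    (lt_of_bump_fst_eq_some h)

end Bump

namespace IsSSYT

variable {r : List ℕ} {rs : List (List ℕ)}

lemma tail (h : IsSSYT (r :: rs)) : IsSSYT rs := by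
  obtain ⟨hrow, hlen, hcol, hne⟩ := h
  refine ⟨fun s hs => hrow s (.tail _ hs), fun i hi => ?_, fun i j hi hj => ?_,
    fun s hs => hne s (.tail _ hs)⟩
  · simpa using hlen (i + 1) (by simpa using hi)
  · simpa using hcol (i + 1) j (by simpa using hi) (by simpa using hj)

lemma pairwise_head (h : IsSSYT (r :: rs)) : r.Pairwise (· ≤ ·) :=
  h.1 r List.mem_cons_self

lemma length_getD_zero_le (h : IsSSYT (r :: rs)) : (rs.getD 0 []).length ≤ r.length := by
  cases rs with
  | nil => simp
  | cons s rs => simpa using h.2.1 0 (by simp)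

lemma getD_lt_getD_getD_zero (h : IsSSYT (r :: rs)) {j : ℕ} (hj : j < (rs.getD 0 []).length) :
    r.getD j 0 < (rs.getD 0 []).getD j 0 := by
  cases rs with
  | nil => simp at hj
  | cons s rs => simpa using h.2.2.1 0 j (by simp) (by simpa using hj)

end IsSSYT

def insertBox (T : List (List ℕ)) (x : ℕ) : ℕ × ℕ := newBox T (rowInsert T x)

section Insertion

variable {x y : ℕ} {r : List ℕ} {rs : List (List ℕ)}

lemma rowInsert_cons_of_bump_none (h : (bump x r).1 = none) :
    rowInsert (r :: rs) x = (r ++ [x]) :: rs := by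
  rw [rowInsert, show bump x r = (none, r ++ [x]) from Prod.ext h (bump_snd_of_fst_eq_none h)]

lemma rowInsert_cons_of_bump_some (h : (bump x r).1 = some y) :
    rowInsert (r :: rs) x = (bump x r).2 :: rowInsert rs y := by
  rw [rowInsert, show bump x r = (some y, (bump x r).2) from Prod.ext h rfl]

lemma insertBox_nil : insertBox [] x = (0, 0) := rfl

lemma insertBox_cons_of_bump_none (h : (bump x r).1 = none) :
    insertBox (r :: rs) x = (0, r.length) := by
  simp [insertBox, rowInsert_cons_of_bump_none h, newBox, shape, firstDiff]

lemma insertBox_cons_of_bump_some (h : (bump x r).1 = some y) :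
    insertBox (r :: rs) x = ((insertBox rs y).1 + 1, (insertBox rs y).2) := by
  simp [insertBox, rowInsert_cons_of_bump_some h, newBox, shape, firstDiff,
    length_bump_snd_of_fst_eq_some h]

lemma insertBox_snd_le {T : List (List ℕ)} (hT : IsSSYT T) {c : ℕ}
    (hc : c < (T.getD 0 []).length → x < (T.getD 0 []).getD c 0) : (insertBox T x).2 ≤ c := by
  induction T generalizing x with
  | nil => simp [insertBox_nil]
  | cons r rs ih =>
    simp only [List.getD_cons_zero] at hc
    cases hb : (bump x r).1 with
    | none =>
      rw [insertBox_cons_of_bump_none hb]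
      by_contra! hcr
      have hle := bump_fst_eq_none_iff.mp hb _ (List.getD_eq_getElem r 0 hcr ▸ List.getElem_mem hcr)
      exact absurd (hc hcr) (not_lt.mpr hle)
    | some y =>
      rw [insertBox_cons_of_bump_some hb]
      refine ih hT.tail fun hcs => ?_
      have hcr := hcs.trans_le hT.length_getD_zero_le
      have hmem : r.getD c 0 ∈ r := List.getD_eq_getElem r 0 hcr ▸ List.getElem_mem hcr
      exact (bump_fst_le_of_lt hT.pairwise_head hb hmem (hc hcr)).trans_lt
        (hT.getD_lt_getD_getD_zero hcs)

lemma insertBox_snd_le_length {T : List (List ℕ)} (hT : IsSSYT T) :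
    (insertBox T x).2 ≤ (T.getD 0 []).length :=
  insertBox_snd_le hT fun h => absurd h (lt_irrefl _)

lemma insertBox_tail_snd_lt_of_mem (hT : IsSSYT (r :: rs)) (hy : y ∈ r) :
    (insertBox rs y).2 < r.length := by
  obtain ⟨k, hk, rfl⟩ := List.mem_iff_getElem.mp hy
  refine (insertBox_snd_le hT.tail fun hks => ?_).trans_lt hk
  simpa [List.getElem?_eq_getElem hk] using hT.getD_lt_getD_getD_zero hks

end Insertion

theorem insertBox_rowInsert_of_le {T : List (List ℕ)} (hT : IsSSYT T) {x x' : ℕ} (hx : x ≤ x') :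
    (insertBox T x).2 < (insertBox (rowInsert T x) x').2 ∧
      (insertBox (rowInsert T x) x').1 ≤ (insertBox T x).1 := by
  induction T generalizing x x' with
  | nil =>
    have hb' : (bump x' [x]).1 = none := bump_fst_eq_none_iff.mpr (by simpa using hx)
    simp [show rowInsert [] x = [[x]] from rfl, insertBox_nil, insertBox_cons_of_bump_none hb']
  | cons r rs ih =>
    cases hb : (bump x r).1 with
    | none =>
      have hb' : (bump x' (r ++ [x])).1 = none := by
        refine bump_fst_eq_none_iff.mpr fun z hz => ?_
        rcases List.mem_append.mp hz with hz | hz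
        · exact (bump_fst_eq_none_iff.mp hb z hz).trans hx
        · exact List.mem_singleton.mp hz ▸ hx
      rw [rowInsert_cons_of_bump_none hb, insertBox_cons_of_bump_none hb,
        insertBox_cons_of_bump_none hb']
      simp
    | some y =>
      rw [rowInsert_cons_of_bump_some hb, insertBox_cons_of_bump_some hb]
      cases hb' : (bump x' (bump x r).2).1 with
      | none =>
        rw [insertBox_cons_of_bump_none hb', length_bump_snd_of_fst_eq_some hb]
        exact ⟨insertBox_tail_snd_lt_of_mem hT (mem_of_bump_fst_eq_some hb), Nat.zero_le _⟩
      | some y' =>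
        rw [insertBox_cons_of_bump_some hb']
        obtain ⟨hcol, hrow⟩ := ih hT.tail (bump_fst_le_bump_fst hT.pairwise_head hx hb hb')
        exact ⟨hcol, Nat.succ_le_succ hrow⟩

theorem insertBox_rowInsert_of_lt {T : List (List ℕ)} (hT : IsSSYT T) {x x' : ℕ} (hx : x' < x) :
    (insertBox (rowInsert T x) x').2 ≤ (insertBox T x).2 ∧
      (insertBox T x).1 < (insertBox (rowInsert T x) x').1 := by
  induction T generalizing x x' with
  | nil =>
    have hb' : (bump x' [x]).1 = some x := by simp [hx]
    simp [show rowInsert [] x = [[x]] from rfl, insertBox_nil, insertBox_cons_of_bump_some hb']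
  | cons r rs ih =>
    cases hb : (bump x r).1 with
    | none =>
      rw [rowInsert_cons_of_bump_none hb, insertBox_cons_of_bump_none hb]
      cases hb' : (bump x' (r ++ [x])).1 with
      | none => exact absurd (bump_fst_eq_none_iff.mp hb' x (by simp)) (not_le.mpr hx)
      | some y' =>
        rw [insertBox_cons_of_bump_some hb']
        exact ⟨(insertBox_snd_le_length hT.tail).trans hT.length_getD_zero_le, Nat.succ_pos _⟩
    | some y =>
      rw [rowInsert_cons_of_bump_some hb, insertBox_cons_of_bump_some hb]
      cases hb' : (bump x' (bump x r).2).1 with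
      | none => exact absurd (bump_fst_eq_none_iff.mp hb' x mem_bump_snd) (not_le.mpr hx)
      | some y' =>
        rw [insertBox_cons_of_bump_some hb']
        obtain ⟨hcol, hrow⟩ := ih hT.tail (bump_fst_lt_bump_fst hT.pairwise_head hx hb hb')
        exact ⟨hcol, Nat.succ_lt_succ hrow⟩

/-- **Row-bumping lemma**: inserting `x` then `x'` into a semistandard tableau
creates boxes `B` then `B'`.  If `x ≤ x'` then `B` is strictly left of and
weakly below `B'`; if `x > x'` then `B'` is weakly left of and strictly below
`B`. -/
theorem row_bumping_lemma (T : List (List ℕ)) (hT : IsSSYT T) (x x' : ℕ) :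
    (x ≤ x' →
      (newBox T (rowInsert T x)).2 < (newBox (rowInsert T x) (rowInsert (rowInsert T x) x')).2 ∧
      (newBox (rowInsert T x) (rowInsert (rowInsert T x) x')).1 ≤ (newBox T (rowInsert T x)).1) ∧
    (x' < x →
      (newBox (rowInsert T x) (rowInsert (rowInsert T x) x')).2 ≤ (newBox T (rowInsert T x)).2 ∧
      (newBox T (rowInsert T x)).1 < (newBox (rowInsert T x) (rowInsert (rowInsert T x) x')).1) :=
  ⟨insertBox_rowInsert_of_le hT, insertBox_rowInsert_of_lt hT⟩
end

section
/- Inclusion–exclusion for restricted walks: for all p ∈ Z^2 and even m^+, m^-, w'_2(m^+, m^-; p) = Σ_{k,l ≥ 0} (-1)^{k+l} w'_2(k, l; m^+, m^-; p). -/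
/-- `w'_2(m⁺, m⁻; p)` with `m⁺ = 2·np`, `m⁻ = 2·nn`: the number of walks in
`ℤ²` from the origin to `p` whose `m⁺` positive steps, grouped in pairs
`(a_{u^1}, a_{u^2})` indexed by `u ∈ Fin np`, all precede the `m⁻` negative
steps, grouped in pairs `(b_{v^1}, b_{v^2})` indexed by `v ∈ Fin nn`, and
which satisfy `a_{u^1} ≥ a_{u^2}` and `b_{v^1} ≥ b_{v^2}` for all `u, v`.
A walk is encoded by the direction data
`(a, b) : (Fin np → Fin 2 → Fin 2) × (Fin nn → Fin 2 → Fin 2)`. -/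
noncomputable def W2count (np nn : ℕ) (p : Fin 2 → ℤ) : ℕ :=
  Nat.card {ab : (Fin np → Fin 2 → Fin 2) × (Fin nn → Fin 2 → Fin 2) //
    (∀ u, ab.1 u 1 ≤ ab.1 u 0) ∧ (∀ v, ab.2 v 1 ≤ ab.2 v 0) ∧
    ∀ j : Fin 2,
      ((Finset.univ.filter fun q : Fin np × Fin 2 => ab.1 q.1 q.2 = j).card : ℤ) -
        ((Finset.univ.filter fun q : Fin nn × Fin 2 => ab.2 q.1 q.2 = j).card : ℤ) = p j}

/-- `w'_2(k, l; m⁺, m⁻; p)` with `m⁺ = 2·np`, `m⁻ = 2·nn`: the number of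
choices of `K ⊆ U` with `|K| = k`, `L ⊆ V` with `|L| = l`, together with a
walk in `W^*(m⁺, m⁻; p)` (positive steps preceding negative steps, no
monotonicity restriction) such that `(a_{u^1}, a_{u^2}) = (1, 2)` (0-indexed
directions `(0, 1)`) for all `u ∈ K` and `(b_{v^1}, b_{v^2}) = (1, 2)` for all
`v ∈ L`. -/
noncomputable def W2klCount (np nn k l : ℕ) (p : Fin 2 → ℤ) : ℕ :=
  Nat.card {x : Finset (Fin np) × Finset (Fin nn) ×
      (Fin np → Fin 2 → Fin 2) × (Fin nn → Fin 2 → Fin 2) //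
    x.1.card = k ∧ x.2.1.card = l ∧
    (∀ u ∈ x.1, x.2.2.1 u 0 = 0 ∧ x.2.2.1 u 1 = 1) ∧
    (∀ v ∈ x.2.1, x.2.2.2 v 0 = 0 ∧ x.2.2.2 v 1 = 1) ∧
    ∀ j : Fin 2,
      ((Finset.univ.filter fun q : Fin np × Fin 2 => x.2.2.1 q.1 q.2 = j).card : ℤ) -
        ((Finset.univ.filter fun q : Fin nn × Fin 2 => x.2.2.2 q.1 q.2 = j).card : ℤ) = p j}

/-!
Call a pair `u` an ascent of the positive steps when `(a_{u^1}, a_{u^2}) = (1, 2)`, and likewise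
for the negative steps; the walks counted by `w'_2(m⁺, m⁻; p)` are those without ascents. Counting
the triples `(K, L, walk)` with `K`, `L` sets of ascents, each walk contributes
`(∑_{K ⊆ asc a} (-1)^{|K|}) · (∑_{L ⊆ asc b} (-1)^{|L|})` to the alternating sum, and this is `1`
if both ascent sets are empty and `0` otherwise.
-/

open Finset

section InclusionExclusion

variable {ι κ X : Type*} [Fintype ι] [Fintype κ] [Fintype X] [DecidableEq ι] [DecidableEq κ]

lemma sum_ite_subset_neg_one_pow_card (s : Finset ι) :
    ∑ K : Finset ι, (if K ⊆ s then (-1 : ℤ) ^ #K else 0) = if s = ∅ then 1 else 0 := by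
  rw [← sum_filter, filter_subset_univ, sum_powerset_neg_one_pow_card]

lemma sum_neg_one_pow_card_marked (P : X → Prop) [DecidablePred P] (A : X → Finset ι)
    (B : X → Finset κ) :
    ∑ y : Finset ι × Finset κ × X with y.1 ⊆ A y.2.2 ∧ y.2.1 ⊆ B y.2.2 ∧ P y.2.2,
        (-1 : ℤ) ^ (#y.1 + #y.2.1) = #{x | P x ∧ A x = ∅ ∧ B x = ∅} := by
  rw [sum_filter, Fintype.sum_prod_type, sum_comm, Fintype.sum_prod_type, sum_comm, ← sum_boole]
  refine sum_congr rfl fun x _ => ?_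
  by_cases hx : P x
  · calc _ = (∑ L : Finset κ, if L ⊆ B x then (-1 : ℤ) ^ #L else 0) *
          ∑ K : Finset ι, if K ⊆ A x then (-1 : ℤ) ^ #K else 0 := by
          rw [sum_mul_sum]
          refine sum_congr rfl fun L _ => sum_congr rfl fun K _ => ?_
          rw [ite_zero_mul_ite_zero, pow_add, mul_comm]
          exact if_congr (by tauto) rfl rfl
      _ = _ := by
          rw [sum_ite_subset_neg_one_pow_card, sum_ite_subset_neg_one_pow_card,
            ite_zero_mul_ite_zero, mul_one]
          exact if_congr (by tauto) rfl rfl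
  · simp [hx]

theorem card_eq_alternating_sum_card_marked (P : X → Prop) [DecidablePred P]
    (A : X → Finset ι) (B : X → Finset κ) :
    (#{x | P x ∧ A x = ∅ ∧ B x = ∅} : ℤ) =
      ∑ k ∈ range (Fintype.card ι + 1), ∑ l ∈ range (Fintype.card κ + 1),
        (-1 : ℤ) ^ (k + l) * #{y : Finset ι × Finset κ × X |
          #y.1 = k ∧ #y.2.1 = l ∧ y.1 ⊆ A y.2.2 ∧ y.2.1 ⊆ B y.2.2 ∧ P y.2.2} := by
  have hmaps : ∀ y : Finset ι × Finset κ × X,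
      (#y.1, #y.2.1) ∈ range (Fintype.card ι + 1) ×ˢ range (Fintype.card κ + 1) := fun y => by
    simpa [Nat.lt_succ_iff] using ⟨card_le_univ y.1, card_le_univ y.2.1⟩
  rw [← sum_neg_one_pow_card_marked, ← sum_fiberwise_of_maps_to' (fun y _ => hmaps y)
    (fun kl => (-1 : ℤ) ^ (kl.1 + kl.2)), sum_product]
  refine sum_congr rfl fun k _ => sum_congr rfl fun l _ => ?_
  rw [sum_const, filter_filter, nsmul_eq_mul, mul_comm]
  congr 3
  ext y
  simp only [mem_filter, mem_univ, true_and, Prod.ext_iff]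
  tauto

end InclusionExclusion

section Ascents

variable {ι : Type*} [Fintype ι]

def ascents (f : ι → Fin 2 → Fin 2) : Finset ι :=
  {u | f u 0 = 0 ∧ f u 1 = 1}

lemma ascents_eq_empty_iff (f : ι → Fin 2 → Fin 2) :
    ascents f = ∅ ↔ ∀ u, f u 1 ≤ f u 0 := by
  have h : ∀ x y : Fin 2, ¬(x = 0 ∧ y = 1) ↔ y ≤ x := by decide
  simp [ascents, filter_eq_empty_iff, h]

lemma subset_ascents_iff (f : ι → Fin 2 → Fin 2) (K : Finset ι) :
    K ⊆ ascents f ↔ ∀ u ∈ K, f u 0 = 0 ∧ f u 1 = 1 := by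
  simp [ascents, subset_iff]

end Ascents

section Walks

variable {np nn : ℕ}

def EndsAt (p : Fin 2 → ℤ) (ab : (Fin np → Fin 2 → Fin 2) × (Fin nn → Fin 2 → Fin 2)) : Prop :=
  ∀ j : Fin 2,
    ((univ.filter fun q : Fin np × Fin 2 => ab.1 q.1 q.2 = j).card : ℤ) -
      ((univ.filter fun q : Fin nn × Fin 2 => ab.2 q.1 q.2 = j).card : ℤ) = p j

instance (p : Fin 2 → ℤ) : DecidablePred (EndsAt (np := np) (nn := nn) p) :=
  fun _ => Fintype.decidableForallFintype

lemma W2count_eq_card (p : Fin 2 → ℤ) :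
    W2count np nn p = #{ab : (Fin np → Fin 2 → Fin 2) × (Fin nn → Fin 2 → Fin 2) |
      EndsAt p ab ∧ ascents ab.1 = ∅ ∧ ascents ab.2 = ∅} := by
  rw [W2count, Nat.card_eq_fintype_card, Fintype.card_subtype]
  simp only [ascents_eq_empty_iff]
  exact congrArg card (filter_congr fun _ _ => by unfold EndsAt; tauto)

lemma W2klCount_eq_card (k l : ℕ) (p : Fin 2 → ℤ) :
    W2klCount np nn k l p = #{y : Finset (Fin np) × Finset (Fin nn) ×
      (Fin np → Fin 2 → Fin 2) × (Fin nn → Fin 2 → Fin 2) |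
      #y.1 = k ∧ #y.2.1 = l ∧ y.1 ⊆ ascents y.2.2.1 ∧ y.2.1 ⊆ ascents y.2.2.2 ∧
        EndsAt p y.2.2} := by
  rw [W2klCount, Nat.card_eq_fintype_card, Fintype.card_subtype]
  simp only [subset_ascents_iff]
  exact congrArg card (filter_congr fun _ _ => Iff.rfl)

end Walks

/-- **Lemma 10 (inclusion–exclusion)**: for all `p ∈ ℤ²` and even
`m⁺ = 2·np`, `m⁻ = 2·nn`,
`w'_2(m⁺, m⁻; p) = Σ_{k,l ≥ 0} (-1)^{k+l} w'_2(k, l; m⁺, m⁻; p)`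
(the terms with `k > np` or `l > nn` vanish). -/
theorem inclusion_exclusion_restricted_walks (np nn : ℕ) (p : Fin 2 → ℤ) :
    (W2count np nn p : ℤ) =
      ∑ k ∈ Finset.range (np + 1), ∑ l ∈ Finset.range (nn + 1),
        (-1) ^ (k + l) * (W2klCount np nn k l p : ℤ) := by
  rw [W2count_eq_card, card_eq_alternating_sum_card_marked]
  simp only [Fintype.card_fin, W2klCount_eq_card]
end
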